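/- Let E ⊆ ℂ be the splitting field over ℚ of the polynomial X³ − X² + 1. Then: (1) the complex number √(−23) = i·√23 lies in E, so E contains the field F = ℚ(√(−23)); (2) [E : ℚ] = 6; and (3) the extension E/F is a Galois extension of degree 3, and its Galois group Gal(E/F) is cyclic (of order 3). -/

import Mathlib

open Polynomial

/-- The splitting field inside `ℂ` of `X ^ 3 - X ^ 2 + 1` over `ℚ`. -/
noncomputable def Esplit : IntermediateField ℚ ℂ :=
  IntermediateField.adjoin ℚ ((X ^ 3 - X ^ 2 + 1 : Polynomial ℚ).rootSet ℂ)

/-- The field `F = ℚ(√(-23)) ⊆ ℂ`. -/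
noncomputable def Fsqrt : IntermediateField ℚ ℂ :=
  IntermediateField.adjoin ℚ {(Complex.I * Real.sqrt 23 : ℂ)}

/-!
For the roots `a, b, c` of `X³ - X² + 1` in `ℂ`, the square of `(a - b)(a - c)(b - c)` is the
discriminant `-23`, so `√(-23) ∈ E`. Hence `[E : ℚ]` is divisible by `[ℚ(√(-23)) : ℚ] = 2` and by
`[ℚ(a) : ℚ] = 3` (the cubic is irreducible, already modulo `2`), while it divides `3! = 6` since
`Gal(E/ℚ)` acts faithfully on the three roots. So `[E : ℚ] = 6`, and `E / F` is Galois of prime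
degree `3`, hence cyclic.
-/

open IntermediateField

theorem mem_of_sq_eq_sq {R S : Type*} [CommRing R] [NoZeroDivisors R] [SetLike S R]
    [NegMemClass S R] {E : S} {s t : R} (hs : s ∈ E) (h : t ^ 2 = s ^ 2) : t ∈ E := by
  rcases sq_eq_sq_iff_eq_or_eq_neg.mp h with rfl | rfl
  · exact hs
  · exact neg_mem hs

section General
variable {K L : Type*} [Field K] [Field L] [Algebra K L]

theorem Polynomial.finrank_splittingField_dvd_factorial {p : K[X]} (hp : p.Separable) :
    Module.finrank K p.SplittingField ∣ p.natDegree.factorial := by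
  have : Fact ((p.map (algebraMap K p.SplittingField)).Splits) := ⟨SplittingField.splits p⟩
  have hroots : Nat.card (p.rootSet p.SplittingField) = p.natDegree := by
    rw [Nat.card_eq_fintype_card, card_rootSet_eq_natDegree hp (SplittingField.splits p)]
  rw [← Gal.card_of_separable hp, ← hroots, ← Nat.card_perm]
  exact Subgroup.card_dvd_of_injective _ (Gal.galActionHom_injective p p.SplittingField)

theorem Cubic.mem_adjoin_rootSet_of_sq_eq_discr {P : Cubic K} (ha : P.a ≠ 0)
    (hP : (P.toPoly.map (algebraMap K L)).Splits) {t : L}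
    (ht : t ^ 2 = algebraMap K L P.discr) : t ∈ adjoin K (P.toPoly.rootSet L) := by
  obtain ⟨x, y, z, h3⟩ := (Cubic.splits_iff_roots_eq_three ha).mp hP
  have hroot : ∀ r ∈ ({x, y, z} : Multiset L), r ∈ adjoin K (P.toPoly.rootSet L) := by
    intro r hr
    apply subset_adjoin
    rw [rootSet, aroots, ← Cubic.map_roots, h3]
    simpa using hr
  refine mem_of_sq_eq_sq ?_ (ht.trans (Cubic.discr_eq_prod_three_roots ha h3))
  have hx := hroot x (by simp)
  have hy := hroot y (by simp)
  have hz := hroot z (by simp)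
  have ha' := (adjoin K (P.toPoly.rootSet L)).algebraMap_mem P.a
  exact mul_mem (mul_mem (mul_mem (mul_mem ha' ha') (sub_mem hx hy)) (sub_mem hx hz))
    (sub_mem hy hz)

theorem IntermediateField.finrank_adjoin_simple_eq_natDegree {p : K[X]} (hp : Irreducible p)
    (hm : p.Monic) {x : L} (hx : aeval x p = 0) : Module.finrank K K⟮x⟯ = p.natDegree := by
  rw [adjoin.finrank ⟨p, hm, by rwa [← aeval_def]⟩, ← minpoly.eq_of_irreducible_of_monic hp hx hm]

theorem IsGalois.isCyclic_of_finrank_prime [IsGalois K L] (hp : (Module.finrank K L).Prime) :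
    IsCyclic Gal(L/K) := by
  have : Fact (Module.finrank K L).Prime := ⟨hp⟩
  have : FiniteDimensional K L := Module.finite_of_finrank_pos hp.pos
  exact isCyclic_of_prime_card (IsGalois.card_aut_eq_finrank K L)

end General

def cubicPoly : Cubic ℚ := ⟨1, -1, 0, 1⟩

lemma cubicPoly_toPoly : cubicPoly.toPoly = X ^ 3 - X ^ 2 + 1 := by
  simp [cubicPoly, Cubic.toPoly]; ring

lemma cubicPoly_discr : cubicPoly.discr = -23 := by norm_num [cubicPoly, Cubic.discr]

lemma irreducible_X_pow_three_add_X_sq_add_one_zmod_two :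
    Irreducible (X ^ 3 + X ^ 2 + 1 : (ZMod 2)[X]) := by
  have hdeg : (X ^ 3 + X ^ 2 + 1 : (ZMod 2)[X]).natDegree = 3 := by compute_degree!
  rw [irreducible_iff_roots_eq_zero_of_degree_le_three (by omega) (by omega),
    Multiset.eq_zero_iff_forall_notMem]
  intro x hx
  rw [mem_roots (ne_zero_of_natDegree_gt (n := 0) (by omega))] at hx
  revert x
  simp only [IsRoot, eval_add, eval_pow, eval_X, eval_one]
  decide

lemma irreducible_X_pow_three_sub_X_sq_add_one : Irreducible (X ^ 3 - X ^ 2 + 1 : ℚ[X]) := by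
  have hmon : (X ^ 3 - X ^ 2 + 1 : ℤ[X]).Monic := by monicity!
  have hZ : Irreducible (X ^ 3 - X ^ 2 + 1 : ℤ[X]) := by
    refine hmon.irreducible_of_irreducible_map (Int.castRingHom (ZMod 2)) _ ?_
    convert irreducible_X_pow_three_add_X_sq_add_one_zmod_two using 1
    simp only [sub_eq_add_neg, Polynomial.map_add, Polynomial.map_neg, Polynomial.map_pow, map_X,
      Polynomial.map_one, CharTwo.neg_eq]
  simpa using (hmon.irreducible_iff_irreducible_map_fraction_map (K := ℚ)).mp hZ

lemma irreducible_X_sq_add_23 : Irreducible (X ^ 2 + 23 : ℚ[X]) := by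
  have hdeg : (X ^ 2 + 23 : ℚ[X]).natDegree = 2 := by compute_degree!
  rw [irreducible_iff_roots_eq_zero_of_degree_le_three (by omega) (by omega),
    Multiset.eq_zero_iff_forall_notMem]
  intro r hr
  rw [mem_roots (ne_zero_of_natDegree_gt (n := 0) (by omega))] at hr
  simp only [IsRoot, eval_add, eval_pow, eval_X, eval_ofNat] at hr
  nlinarith [sq_nonneg r]

lemma sq_I_mul_sqrt_23 : (Complex.I * Real.sqrt 23 : ℂ) ^ 2 = -23 := by
  rw [mul_pow, Complex.I_sq, ← Complex.ofReal_pow, Real.sq_sqrt (by norm_num)]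
  norm_num

lemma finrank_Fsqrt : Module.finrank ℚ Fsqrt = 2 := by
  have : Module.finrank ℚ Fsqrt = (X ^ 2 + 23 : ℚ[X]).natDegree :=
    finrank_adjoin_simple_eq_natDegree irreducible_X_sq_add_23 (by monicity!)
      (by rw [map_add, map_pow, aeval_X, sq_I_mul_sqrt_23, map_ofNat]; norm_num)
  rw [this]; compute_degree!

lemma I_mul_sqrt_23_mem_Esplit : (Complex.I * Real.sqrt 23 : ℂ) ∈ Esplit := by
  have h := cubicPoly.mem_adjoin_rootSet_of_sq_eq_discr (L := ℂ) (by simp [cubicPoly])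
    (IsAlgClosed.splits _) (t := Complex.I * Real.sqrt 23)
    (by simp [cubicPoly_discr, sq_I_mul_sqrt_23])
  rwa [cubicPoly_toPoly] at h

lemma Fsqrt_le_Esplit : Fsqrt ≤ Esplit :=
  adjoin_simple_le_iff.mpr I_mul_sqrt_23_mem_Esplit

instance : IsSplittingField ℚ Esplit (X ^ 3 - X ^ 2 + 1 : ℚ[X]) :=
  adjoin_rootSet_isSplittingField (IsAlgClosed.splits _)

lemma natDegree_X_pow_three_sub_X_sq_add_one : (X ^ 3 - X ^ 2 + 1 : ℚ[X]).natDegree = 3 := by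
  compute_degree!

lemma finrank_Esplit : Module.finrank ℚ Esplit = 6 := by
  have hdvd6 : Module.finrank ℚ Esplit ∣ 6 := by
    rw [(IsSplittingField.algEquiv Esplit (X ^ 3 - X ^ 2 + 1 : ℚ[X])).toLinearEquiv.finrank_eq]
    simpa [natDegree_X_pow_three_sub_X_sq_add_one, Nat.factorial] using
      finrank_splittingField_dvd_factorial irreducible_X_pow_three_sub_X_sq_add_one.separable
  obtain ⟨a, ha⟩ := IsAlgClosed.exists_aeval_eq_zero ℂ (X ^ 3 - X ^ 2 + 1 : ℚ[X])
    (degree_pos_of_irreducible irreducible_X_pow_three_sub_X_sq_add_one).ne'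
  have haE : ℚ⟮a⟯ ≤ Esplit :=
    adjoin_simple_le_iff.mpr (subset_adjoin _ _ ((mem_rootSet_of_ne
      irreducible_X_pow_three_sub_X_sq_add_one.ne_zero).mpr ha))
  have h3 : 3 ∣ Module.finrank ℚ Esplit := by
    have := finrank_dvd_of_le_right haE
    rwa [finrank_adjoin_simple_eq_natDegree irreducible_X_pow_three_sub_X_sq_add_one
      (by monicity!) ha, natDegree_X_pow_three_sub_X_sq_add_one] at this
  have h2 : 2 ∣ Module.finrank ℚ Esplit := finrank_Fsqrt ▸ finrank_dvd_of_le_right Fsqrt_le_Esplit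
  exact Nat.dvd_antisymm hdvd6 (Nat.Coprime.mul_dvd_of_dvd_of_dvd (by norm_num) h2 h3)

instance : IsGalois ℚ Esplit :=
  IsGalois.of_separable_splitting_field irreducible_X_pow_three_sub_X_sq_add_one.separable

theorem splitting_field_facts :
    (Complex.I * Real.sqrt 23 : ℂ) ∈ Esplit ∧
    Module.finrank ℚ Esplit = 6 ∧
    ∃ h : Fsqrt ≤ Esplit,
      IsGalois Fsqrt (IntermediateField.extendScalars h) ∧
      Module.finrank Fsqrt (IntermediateField.extendScalars h) = 3 ∧
      IsCyclic ((IntermediateField.extendScalars h) ≃ₐ[Fsqrt]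
        (IntermediateField.extendScalars h)) := by
  have hdeg : Module.finrank Fsqrt (extendScalars Fsqrt_le_Esplit) = 3 := by
    have := finrank_bot_mul_relfinrank Fsqrt_le_Esplit
    rw [finrank_Fsqrt, finrank_Esplit, relfinrank_eq_finrank_of_le Fsqrt_le_Esplit] at this
    omega
  have : IsGalois ℚ (extendScalars Fsqrt_le_Esplit) := inferInstanceAs (IsGalois ℚ Esplit)
  have hgal : IsGalois Fsqrt (extendScalars Fsqrt_le_Esplit) :=
    IsGalois.tower_top_of_isGalois ℚ _ _
  exact ⟨I_mul_sqrt_23_mem_Esplit, finrank_Esplit, Fsqrt_le_Esplit, hgal, hdeg,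
    IsGalois.isCyclic_of_finrank_prime (hdeg ▸ Nat.prime_three)⟩
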